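/- Let $F$ be a non-archimedean local field with normalized absolute value $|\cdot|_F$. For every $g \in \mathrm{GL}_r(F)$ and every non-archimedean norm $\nu$ on $F^r$, the lattice discriminant satisfies $D(g*\nu) = |\det g|_F \cdot D(\nu)$, where $(g*\nu)(x) := \nu(xg)$ for row vectors $x \in F^r$. -/

import Mathlib

/-!
Ultrametric Hadamard inequality: if `b` is orthogonal for `ν`, then
`|det C| ∏ ν(b j) ≤ ∏ ν(∑ⱼ C i j • b j)`, since `|det C|` is bounded by a single permutation term
and orthogonality gives `ν(∑ⱼ c j • b j) ≥ |c i| ν(b i)`. An `O_F`-basis of `O_F^r` has a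
determinant of absolute value `1`, so for such an orthogonal basis the inequality reads
`|det W| D(ν) ≤ ∏ ν(W i)` for every matrix `W`. Taking for `W` the matrix with rows `u' i ᵥ* g`
and the `ν`-orthogonal basis `u` gives `|det g| D(ν) ≤ D(g*ν)`; taking the matrix with rows
`u i ᵥ* g⁻¹` and the `g*ν`-orthogonal basis `u'` gives `|det g|⁻¹ D(g*ν) ≤ D(ν)`.
-/

/-- An abstract (non-archimedean, multiplicative) absolute value on a field `F`. -/
structure NAAbs (F : Type*) [Field F] where
  abs : F → ℝ
  nonneg : ∀ a, 0 ≤ abs a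
  eq_zero : ∀ a, abs a = 0 ↔ a = 0
  map_mul : ∀ a b, abs (a * b) = abs a * abs b
  ultra : ∀ a b, abs (a + b) ≤ max (abs a) (abs b)

/-- `F` together with `A` is a non-archimedean *local* field with uniformizer `π`:
the value group is discrete with generator `|π| < 1`, the residue field is finite,
and `F` is complete. -/
def NAAbs.IsLocal {F : Type*} [Field F] (A : NAAbs F) (π : F) : Prop :=
  π ≠ 0 ∧ A.abs π < 1 ∧ (∀ a : F, A.abs a < 1 → A.abs a ≤ A.abs π) ∧
  (∃ S : Finset F, ∀ a : F, A.abs a ≤ 1 → ∃ s ∈ S, A.abs (a - s) < 1) ∧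
  (∀ f : ℕ → F, (∀ ε : ℝ, 0 < ε → ∃ N, ∀ m ≥ N, ∀ n ≥ N, A.abs (f m - f n) < ε) →
    ∃ x : F, ∀ ε : ℝ, 0 < ε → ∃ N, ∀ n ≥ N, A.abs (f n - x) < ε)

/-- A non-archimedean norm on an `F`-vector space `V`, relative to the absolute value `A`. -/
structure NANorm {F : Type*} [Field F] (A : NAAbs F)
    (V : Type*) [AddCommGroup V] [Module F V] where
  nu : V → ℝ
  nonneg : ∀ v, 0 ≤ nu v
  eq_zero : ∀ v, nu v = 0 ↔ v = 0
  smul_eq : ∀ (a : F) (v : V), nu (a • v) = A.abs a * nu v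
  ultra : ∀ u v, nu (u + v) ≤ max (nu u) (nu v)

/-- `b` is an `O_F`-basis of the `O_F`-lattice `L ⊆ V`. -/
def IsLatticeBasis {F : Type*} [Field F] (A : NAAbs F)
    {V : Type*} [AddCommGroup V] [Module F V]
    {ι : Type*} [Fintype ι] (b : ι → V) (L : Set V) : Prop :=
  LinearIndependent F b ∧
  ∀ v : V, v ∈ L ↔ ∃ c : ι → F, (∀ i, A.abs (c i) ≤ 1) ∧ v = ∑ i, c i • b i

/-- `b` is orthogonal with respect to the norm(-like function) `νn`. -/
def IsOrthogonalFor {F : Type*} [Field F] (A : NAAbs F)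
    {V : Type*} [AddCommGroup V] [Module F V]
    {ι : Type*} [Fintype ι] (νn : V → ℝ) (b : ι → V) : Prop :=
  ∀ c : ι → F, νn (∑ i, c i • b i) = ⨆ i, νn (c i • b i)

namespace NAAbs

variable {F : Type*} [Field F] (A : NAAbs F)

def toAbsoluteValue : AbsoluteValue F ℝ where
  toFun := A.abs
  map_mul' := A.map_mul
  nonneg' := A.nonneg
  eq_zero' := A.eq_zero
  add_le' a b := (A.ultra a b).trans (max_le_add_of_nonneg (A.nonneg a) (A.nonneg b))

@[simp]
lemma abs_zero : A.abs 0 = 0 := A.toAbsoluteValue.map_zero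

@[simp]
lemma abs_one : A.abs 1 = 1 := A.toAbsoluteValue.map_one

lemma isUnit_of_abs_eq_one {a : F} (ha : A.abs a = 1) : IsUnit a :=
  isUnit_iff_ne_zero.mpr fun h => by simp [h] at ha

lemma isNonarchimedean : IsNonarchimedean A.abs := A.ultra

lemma abs_units_int_smul (n : ℤˣ) (x : F) : A.abs (n • x) = A.abs x := by
  rcases Int.units_eq_one_or n with rfl | rfl
  · rw [one_smul]
  · rw [Units.neg_smul, one_smul]
    exact A.toAbsoluteValue.map_neg x

lemma abs_prod {ι : Type*} (s : Finset ι) (f : ι → F) :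
    A.abs (∏ i ∈ s, f i) = ∏ i ∈ s, A.abs (f i) :=
  map_prod A.toAbsoluteValue f s

lemma exists_abs_det_le {ι : Type*} [Fintype ι] [DecidableEq ι] (M : Matrix ι ι F) :
    ∃ σ : Equiv.Perm ι, A.abs M.det ≤ ∏ i, A.abs (M (σ i) i) := by
  obtain ⟨σ, -, hσ⟩ := A.isNonarchimedean.finset_image_add_of_nonempty
    (fun σ : Equiv.Perm ι => Equiv.Perm.sign σ • ∏ i, M (σ i) i) Finset.univ_nonempty
  refine ⟨σ, ?_⟩
  rw [Matrix.det_apply, ← A.abs_prod]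
  exact hσ.trans (A.abs_units_int_smul _ _).le

lemma abs_det_le_one {ι : Type*} [Fintype ι] [DecidableEq ι] {M : Matrix ι ι F}
    (hM : ∀ i j, A.abs (M i j) ≤ 1) : A.abs M.det ≤ 1 := by
  obtain ⟨σ, hσ⟩ := A.exists_abs_det_le M
  exact hσ.trans (Finset.prod_le_one (fun i _ => A.nonneg _) fun i _ => hM _ _)

end NAAbs

section Orthogonal

variable {F : Type*} [Field F] {A : NAAbs F} {ι : Type*} [Fintype ι]
  {V : Type*} [AddCommGroup V] [Module F V]

lemma IsOrthogonalFor.apply_smul_le_apply_sum {νn : V → ℝ} {b : ι → V}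
    (hb : IsOrthogonalFor A νn b) (c : ι → F) (i : ι) :
    νn (c i • b i) ≤ νn (∑ j, c j • b j) := by
  rw [hb c]
  exact le_ciSup (f := fun j => νn (c j • b j)) (Set.finite_range _).bddAbove i

lemma IsOrthogonalFor.abs_det_mul_prod_le [DecidableEq ι] {νn : V → ℝ} {b : ι → V}
    (hb : IsOrthogonalFor A νn b) (hnonneg : ∀ v, 0 ≤ νn v)
    (hsmul : ∀ (a : F) (v : V), νn (a • v) = A.abs a * νn v) (C : Matrix ι ι F) :
    A.abs C.det * ∏ j, νn (b j) ≤ ∏ i, νn (∑ j, C i j • b j) := by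
  obtain ⟨σ, hσ⟩ := A.exists_abs_det_le C
  calc A.abs C.det * ∏ j, νn (b j)
      ≤ (∏ i, A.abs (C (σ i) i)) * ∏ i, νn (b i) :=
        mul_le_mul_of_nonneg_right hσ (Finset.prod_nonneg fun i _ => hnonneg _)
    _ = ∏ i, νn (C (σ i) i • b i) := by
        simp only [hsmul, Finset.prod_mul_distrib]
    _ ≤ ∏ i, νn (∑ j, C (σ i) j • b j) :=
        Finset.prod_le_prod (fun i _ => hnonneg _)
          fun i _ => hb.apply_smul_le_apply_sum (C (σ i)) i
    _ = ∏ i, νn (∑ j, C i j • b j) := Equiv.prod_comp σ fun i => νn (∑ j, C i j • b j)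

lemma IsOrthogonalFor.abs_det_mul_prod_le_prod_mul [DecidableEq ι]
    {νn : (ι → F) → ℝ} {b : ι → ι → F}
    (hb : IsOrthogonalFor A νn b) (hnonneg : ∀ v, 0 ≤ νn v)
    (hsmul : ∀ (a : F) (v : ι → F), νn (a • v) = A.abs a * νn v) (C : Matrix ι ι F) :
    A.abs C.det * ∏ j, νn (b j) ≤ ∏ i, νn ((C * Matrix.of b) i) := by
  calc _ ≤ _ := hb.abs_det_mul_prod_le hnonneg hsmul C
    _ = _ := by simp only [Matrix.mul_apply_eq_vecMul, Matrix.vecMul_eq_sum]; rfl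

lemma IsOrthogonalFor.abs_det_mul_prod_le_prod_rows [DecidableEq ι]
    {νn : (ι → F) → ℝ} {b : ι → ι → F}
    (hb : IsOrthogonalFor A νn b) (hnonneg : ∀ v, 0 ≤ νn v)
    (hsmul : ∀ (a : F) (v : ι → F), νn (a • v) = A.abs a * νn v)
    (hb_det : A.abs (Matrix.of b).det = 1) (W : Matrix ι ι F) :
    A.abs W.det * ∏ j, νn (b j) ≤ ∏ i, νn (W i) := by
  have hC : W * (Matrix.of b)⁻¹ * Matrix.of b = W :=
    Matrix.nonsing_inv_mul_cancel_right _ W (A.isUnit_of_abs_eq_one hb_det)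
  have h := hb.abs_det_mul_prod_le_prod_mul hnonneg hsmul (W * (Matrix.of b)⁻¹)
  have hC_det : A.abs (W * (Matrix.of b)⁻¹).det = A.abs W.det := by
    conv_rhs => rw [← hC]
    rw [Matrix.det_mul _ (Matrix.of b), A.map_mul, hb_det, mul_one]
  rwa [hC, hC_det] at h

end Orthogonal

lemma abs_det_eq_one_of_isLatticeBasis {F : Type*} [Field F] (A : NAAbs F)
    {ι : Type*} [Fintype ι] [DecidableEq ι] {u : ι → ι → F}
    (hu : IsLatticeBasis A u {x : ι → F | ∀ i, A.abs (x i) ≤ 1}) :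
    A.abs (Matrix.of u).det = 1 := by
  have single_mem (k : ι) : Pi.single k (1 : F) ∈ {x : ι → F | ∀ i, A.abs (x i) ≤ 1} := by
    intro i
    by_cases h : i = k <;> simp [h]
  have entry_le (j i : ι) : A.abs (u j i) ≤ 1 :=
    (hu.2 (u j)).mpr ⟨Pi.single j 1, single_mem j, by simp [Pi.single_apply]⟩ i
  choose C hC_le hC using fun k => (hu.2 _).mp (single_mem k)
  have hCU : Matrix.of C * Matrix.of u = 1 := by
    ext k j
    rw [Matrix.mul_apply_eq_vecMul, Matrix.vecMul_eq_sum, Matrix.one_eq_pi_single]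
    exact congrFun (hC k).symm j
  have hdet : A.abs (Matrix.of C).det * A.abs (Matrix.of u).det = 1 := by
    rw [← A.map_mul, ← Matrix.det_mul, hCU, Matrix.det_one, A.abs_one]
  have hC_det := A.abs_det_le_one (M := Matrix.of C) hC_le
  have hu_det := A.abs_det_le_one (M := Matrix.of u) entry_le
  nlinarith [A.nonneg (Matrix.of u).det, A.nonneg (Matrix.of C).det]

theorem statement3_general {F : Type*} [Field F] (A : NAAbs F)
    (r : ℕ) (ν : NANorm A (Fin r → F))
    (g : Matrix (Fin r) (Fin r) F) (hg : IsUnit g.det)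
    (u u' : Fin r → (Fin r → F))
    (hu : IsLatticeBasis A u {x : Fin r → F | ∀ i, A.abs (x i) ≤ 1})
    (huo : IsOrthogonalFor A ν.nu u)
    (hu' : IsLatticeBasis A u' {x : Fin r → F | ∀ i, A.abs (x i) ≤ 1})
    (hu'o : IsOrthogonalFor A (fun x => ν.nu (Matrix.vecMul x g)) u') :
    ∏ i, ν.nu (Matrix.vecMul (u' i) g) = A.abs g.det * ∏ i, ν.nu (u i) := by
  have hU := abs_det_eq_one_of_isLatticeBasis A hu
  have hU' := abs_det_eq_one_of_isLatticeBasis A hu'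
  have lower := huo.abs_det_mul_prod_le_prod_rows ν.nonneg ν.smul_eq hU (Matrix.of u' * g)
  rw [Matrix.det_mul, A.map_mul, hU', one_mul] at lower
  have upper := hu'o.abs_det_mul_prod_le_prod_rows (fun _ => ν.nonneg _)
    (fun a x => by rw [Matrix.smul_vecMul, ν.smul_eq]) hU' (Matrix.of u * g⁻¹)
  simp only [← Matrix.mul_apply_eq_vecMul, Matrix.nonsing_inv_mul_cancel_right g _ hg] at upper
  rw [Matrix.det_mul, A.map_mul, hU, one_mul] at upper
  have hg_inv : A.abs g.det * A.abs g⁻¹.det = 1 := by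
    rw [← A.map_mul, ← Matrix.det_mul, Matrix.mul_nonsing_inv g hg, Matrix.det_one, A.abs_one]
  refine le_antisymm ?_ lower
  calc ∏ i, ν.nu (Matrix.vecMul (u' i) g)
      = A.abs g.det * (A.abs g⁻¹.det * ∏ i, ν.nu (Matrix.vecMul (u' i) g)) := by
        rw [← mul_assoc, hg_inv, one_mul]
    _ ≤ A.abs g.det * ∏ i, ν.nu (u i) := mul_le_mul_of_nonneg_left upper (A.nonneg _)

/-- The lattice discriminant `D(ν) = D_ν(O_F^r)` transforms by
`D(g*ν) = |det g|_F · D(ν)` under the action `(g*ν)(x) = ν(xg)` of `GL_r(F)`. -/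
theorem statement3 {F : Type*} [Field F] (A : NAAbs F) (π : F) (hloc : A.IsLocal π)
    (r : ℕ) (ν : NANorm A (Fin r → F))
    (g : Matrix (Fin r) (Fin r) F) (hg : IsUnit g.det)
    (u u' : Fin r → (Fin r → F))
    (hu : IsLatticeBasis A u {x : Fin r → F | ∀ i, A.abs (x i) ≤ 1})
    (huo : IsOrthogonalFor A ν.nu u)
    (hu' : IsLatticeBasis A u' {x : Fin r → F | ∀ i, A.abs (x i) ≤ 1})
    (hu'o : IsOrthogonalFor A (fun x => ν.nu (Matrix.vecMul x g)) u') :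
    ∏ i, ν.nu (Matrix.vecMul (u' i) g) = A.abs g.det * ∏ i, ν.nu (u i) :=
  statement3_general A r ν g hg u u' hu huo hu' hu'o
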